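/- Let c : (0, ∞) → ℝ be such that for every κ > 0 one has c(κ) > √(1 + κ) and c(κ)^κ·((c(κ) − √κ)² + 1) = exp((c(κ)² − κ)/2)·κ^{κ/2} (i.e. c(κ) = c_κ). Then c(κ) → c₀ as κ → 0⁺; moreover there exist κ₀ > 0 and C > 0 such that for all κ ∈ (0, κ₀), c(κ) < c₀ and c₀ − c(κ) ≤ C·√κ. -/

import Mathlib

open Filter Topology Real Set

noncomputable def hh (w : ℝ) : ℝ := (w^2+1) * Real.exp (-(w^2)/2)

lemma exp_two_le' : Real.exp 2 ≤ 7.4 := by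
  have h := Real.exp_one_lt_d9
  have h2 : Real.exp 2 = Real.exp 1 * Real.exp 1 := by rw [← Real.exp_add]; norm_num
  nlinarith [Real.exp_pos 1]

lemma exp_two_ge' : (7.3:ℝ) ≤ Real.exp 2 := by
  have h := Real.exp_one_gt_d9
  have h2 : Real.exp 2 = Real.exp 1 * Real.exp 1 := by rw [← Real.exp_add]; norm_num
  nlinarith [Real.exp_pos 1]

lemma exp_neg_two_ge' : (0.135:ℝ) ≤ Real.exp (-2) := by
  rw [Real.exp_neg, ← one_div, le_div_iff₀ (Real.exp_pos 2)]
  nlinarith [exp_two_le']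

lemma exp_neg_two_le' : Real.exp (-2) ≤ 0.137 := by
  rw [Real.exp_neg, ← one_div, div_le_iff₀ (Real.exp_pos 2)]
  nlinarith [exp_two_ge']

lemma exp_neg_half_le' : Real.exp (-(1/2):ℝ) ≤ 2/3 := by
  rw [Real.exp_neg, ← one_div, div_le_iff₀ (Real.exp_pos _)]
  nlinarith [Real.add_one_le_exp (1/2:ℝ)]

lemma exp_neg_point605_ge' : (0.5189:ℝ) ≤ Real.exp (-0.605) := by
  have h1 : Real.exp (-0.605) = (Real.exp (-0.15125))^(4:ℕ) := by
    rw [← Real.exp_nat_mul]; norm_num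
  have h2 : (0.84875:ℝ) ≤ Real.exp (-0.15125) := by
    nlinarith [Real.add_one_le_exp (-0.15125:ℝ)]
  have h3 : ((0.84875:ℝ))^(4:ℕ) ≤ (Real.exp (-0.15125))^(4:ℕ) :=
    pow_le_pow_left₀ (by norm_num) h2 4
  rw [h1]
  calc (0.5189:ℝ) ≤ (0.84875:ℝ)^(4:ℕ) := by norm_num
    _ ≤ _ := h3

lemma hasDerivAt_hh (w : ℝ) : HasDerivAt hh (w*(1-w^2) * Real.exp (-(w^2)/2)) w := by
  have h1 : HasDerivAt (fun w : ℝ => w^2+1) (2*w) w := by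
    simpa using ((hasDerivAt_pow 2 w).add_const 1)
  have h0 : HasDerivAt (fun w : ℝ => -(w^2)/2) (-w) w := by
    have := (hasDerivAt_pow 2 w).neg.div_const 2
    exact this.congr_deriv (by norm_num; ring)
  have h2 : HasDerivAt (fun w : ℝ => Real.exp (-(w^2)/2)) (Real.exp (-(w^2)/2) * (-w)) w :=
    (Real.hasDerivAt_exp _).comp w h0
  have := h1.mul h2
  exact this.congr_deriv (by ring)

lemma hh_strictAntiOn : StrictAntiOn hh (Set.Ici 1) := by
  apply strictAntiOn_of_deriv_neg (convex_Ici 1)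
  · exact Continuous.continuousOn (by unfold hh; continuity)
  · intro x hx
    rw [interior_Ici] at hx
    rw [(hasDerivAt_hh x).deriv]
    have h1 : (1:ℝ) < x := hx
    have : x * (1 - x^2) < 0 := by nlinarith
    exact mul_neg_of_neg_of_pos this (Real.exp_pos _)

lemma hh_mono : ∀ a b : ℝ, 1 ≤ a → a ≤ b → hh b ≤ hh a := by
  intro a b ha hab
  rcases eq_or_lt_of_le hab with rfl | h
  · exact le_rfl
  · exact (hh_strictAntiOn (Set.mem_Ici.2 ha) (Set.mem_Ici.2 (by linarith)) h).le

lemma phi_antitoneOn : AntitoneOn (fun w => hh w + 0.03 * w) (Set.Icc 1.1 2) := by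
  have hd : ∀ x : ℝ, HasDerivAt (fun w => hh w + 0.03 * w)
      (x*(1-x^2) * Real.exp (-(x^2)/2) + 0.03) x := by
    intro x
    exact ((hasDerivAt_hh x).add ((hasDerivAt_id x).const_mul 0.03)).congr_deriv (by simp)
  apply antitoneOn_of_deriv_nonpos (convex_Icc 1.1 2)
  · exact Continuous.continuousOn (by unfold hh; continuity)
  · intro x _
    exact (hd x).differentiableAt.differentiableWithinAt
  · intro x hx
    rw [interior_Icc] at hx
    rw [(hd x).deriv]
    have h1 : (1.1:ℝ) < x := hx.1
    have h2 : x < 2 := hx.2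
    have he : Real.exp (-2) ≤ Real.exp (-(x^2)/2) := by
      apply Real.exp_le_exp.2; nlinarith
    have hE : (0.135:ℝ) ≤ Real.exp (-(x^2)/2) := le_trans exp_neg_two_ge' he
    have hx1 : (0.231:ℝ) ≤ x*(x^2-1) := by nlinarith
    have hkey : (0.231:ℝ)*0.135 ≤ (x*(x^2-1))*Real.exp (-(x^2)/2) :=
      mul_le_mul hx1 hE (by norm_num) (by nlinarith)
    nlinarith

lemma z_lt_16 (κ z : ℝ) (hκ : 0 < κ) (hκ1 : κ ≤ 1) (hz0 : 1 < z)
    (hz2 : z ^ κ * ((z - Real.sqrt κ)^2 + 1) = Real.exp ((z^2 - κ)/2) * κ ^ (κ/2)) :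
    z < 16 := by
  by_contra hz16
  push_neg at hz16
  set s := Real.sqrt κ with hs
  have hzpos : (0:ℝ) < z := by linarith
  have hs0 : 0 ≤ s := Real.sqrt_nonneg κ
  have hs1 : s ≤ 1 := by
    rw [hs, show (1:ℝ) = Real.sqrt 1 by simp]
    exact Real.sqrt_le_sqrt hκ1
  have hL1 : z ^ κ ≤ z := by
    calc z ^ κ ≤ z ^ (1:ℝ) := Real.rpow_le_rpow_of_exponent_le hz0.le hκ1
      _ = z := Real.rpow_one z
  have hL2 : (z - s)^2 + 1 ≤ z^2 + 1 := by nlinarith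
  have hLHS : z ^ κ * ((z - s)^2 + 1) ≤ z * (z^2+1) := by
    have h1 : (0:ℝ) < z ^ κ := Real.rpow_pos_of_pos hzpos κ
    have h2 : (0:ℝ) ≤ (z-s)^2 + 1 := by positivity
    nlinarith
  have hpow : Real.exp (-(1/2):ℝ) ≤ κ ^ (κ/2) := by
    rw [Real.rpow_def_of_pos hκ]
    apply Real.exp_le_exp.2
    have hlog : Real.log (1/κ) ≤ 1/κ - 1 := Real.log_le_sub_one_of_pos (by positivity)
    rw [one_div, Real.log_inv] at hlog
    have h1 : -Real.log κ ≤ 1/κ := by rw [one_div]; linarith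
    have h2 : -Real.log κ * (κ/2) ≤ (1/κ) * (κ/2) :=
      mul_le_mul_of_nonneg_right h1 (by positivity)
    have h3 : (1/κ) * (κ/2) = 1/2 := by field_simp
    nlinarith
  have hRHS : Real.exp (z^2/2 - 1) ≤ Real.exp ((z^2-κ)/2) * κ ^ (κ/2) := by
    calc Real.exp (z^2/2 - 1) = Real.exp ((z^2-1)/2) * Real.exp (-(1/2):ℝ) := by
          rw [← Real.exp_add]; congr 1; ring
      _ ≤ Real.exp ((z^2-κ)/2) * κ ^ (κ/2) := by
          apply mul_le_mul _ hpow (Real.exp_pos _).le (Real.exp_pos _).le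
          apply Real.exp_le_exp.2; linarith
  have hcomb : Real.exp (z^2/2 - 1) ≤ z * (z^2+1) := by
    rw [← hz2] at hRHS; linarith
  have hx : (0:ℝ) ≤ (z^2/2 - 1)/3 := by nlinarith
  have hexp3 : Real.exp (z^2/2-1) = (Real.exp ((z^2/2-1)/3))^(3:ℕ) := by
    rw [← Real.exp_nat_mul]; congr 1; ring
  have hge : (1 + (z^2/2-1)/3)^(3:ℕ) ≤ Real.exp (z^2/2-1) := by
    rw [hexp3]
    apply pow_le_pow_left₀ (by linarith) (by linarith [Real.add_one_le_exp ((z^2/2-1)/3)])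
  have hz3 : (4096:ℝ) ≤ z^3 := by nlinarith
  have : z * (z^2+1) < (1 + (z^2/2-1)/3)^(3:ℕ) := by nlinarith
  linarith

lemma P_bounds (κ z : ℝ) (hκ : 0 < κ) (hκ1 : κ ≤ 1e-6) (hz0 : 1 < z) (hz16 : z < 16) :
    1 - 0.1 * Real.sqrt κ ≤ Real.exp (-κ/2) * (Real.sqrt κ) ^ κ / z ^ κ ∧
    Real.exp (-κ/2) * (Real.sqrt κ) ^ κ / z ^ κ ≤ 1 := by
  set s := Real.sqrt κ with hs
  have hzpos : (0:ℝ) < z := by linarith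
  have hspos : (0:ℝ) < s := Real.sqrt_pos.2 hκ
  have hsk : s^2 = κ := Real.sq_sqrt hκ.le
  have hs3 : s ≤ 1e-3 := by nlinarith
  have hκs : κ ≤ 1e-3 * s := by nlinarith
  constructor
  · have hPexp : Real.exp (-κ/2) * s ^ κ / z ^ κ
        = Real.exp (-κ/2 + Real.log s * κ - Real.log z * κ) := by
      rw [Real.rpow_def_of_pos hspos, Real.rpow_def_of_pos hzpos,
        ← Real.exp_add, ← Real.exp_sub]
    rw [hPexp]
    have hbound := Real.add_one_le_exp (-κ/2 + Real.log s * κ - Real.log z * κ)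
    have ht1 : κ/2 ≤ 0.0005 * s := by linarith
    have ht2 : -Real.log s * κ ≤ 0.08 * s := by
      set q := κ ^ ((1:ℝ)/4) with hq
      have hq0 : 0 < q := Real.rpow_pos_of_pos hκ _
      have hq4 : q^(4:ℕ) = κ := by
        rw [hq, ← Real.rpow_natCast (κ ^ ((1:ℝ)/4)) 4, ← Real.rpow_mul hκ.le]
        norm_num
      have hsq2 : s = q^2 := by
        have hfac : (s - q^2) * (s + q^2) = 0 := by linear_combination hsk - hq4
        rcases mul_eq_zero.1 hfac with h | h
        · linarith
        · nlinarith [sq_nonneg q]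
      have hq004 : q ≤ 0.04 := by
        nlinarith [sq_nonneg (q^2 - 0.0016), sq_nonneg (q - 0.04), sq_nonneg q]
      have hlogq : -Real.log q ≤ 1/q := by
        have := Real.log_le_sub_one_of_pos (show (0:ℝ) < 1/q by positivity)
        rw [one_div, Real.log_inv] at this
        rw [one_div]; linarith
      have hlogs : -Real.log s ≤ 2/q := by
        rw [hsq2, Real.log_pow]
        push_cast
        calc -(2 * Real.log q) = 2 * (-Real.log q) := by ring
          _ ≤ 2 * (1/q) := by linarith
          _ = 2/q := by ring
      have h1 : -Real.log s * κ ≤ (2/q) * κ := by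
        rcases le_or_gt (-Real.log s) 0 with h | h
        · nlinarith [hκ.le]
        · exact mul_le_mul_of_nonneg_right hlogs hκ.le
      have h2 : (2/q) * κ = 2 * q * s := by
        rw [hsq2, ← hq4]; field_simp
      rw [h2] at h1
      nlinarith
    have ht3 : Real.log z * κ ≤ 0.016 * s := by
      have h1 : Real.log z ≤ 16 := by
        have := Real.log_le_sub_one_of_pos hzpos; linarith
      have h3 : Real.log z * κ ≤ 16 * κ := mul_le_mul_of_nonneg_right h1 hκ.le
      linarith
    linarith
  · have h1 : Real.exp (-κ/2) ≤ 1 := Real.exp_le_one_iff.2 (by linarith)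
    have h2 : s ^ κ ≤ 1 := Real.rpow_le_one hspos.le (by linarith) hκ.le
    have h3 : (1:ℝ) ≤ z ^ κ := Real.one_le_rpow hz0.le hκ.le
    have h4 : (0:ℝ) < z ^ κ := Real.rpow_pos_of_pos hzpos κ
    rw [div_le_one h4]
    have h5 : Real.exp (-κ/2) * s ^ κ ≤ 1 :=
      mul_le_one₀ h1 (Real.rpow_nonneg hspos.le κ) h2
    linarith

set_option maxHeartbeats 1000000 in
lemma key (κ z c₀ : ℝ) (hκ : 0 < κ) (hκ1 : κ < 1e-6)
    (hc₀1 : 1 < c₀) (hc₀2 : c₀^2+1 = Real.exp (c₀^2/2))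
    (hz1 : Real.sqrt (1+κ) < z)
    (hz2 : z ^ κ * ((z - Real.sqrt κ)^2 + 1) = Real.exp ((z^2-κ)/2) * κ^(κ/2)) :
    z < c₀ ∧ c₀ - z ≤ 100 * Real.sqrt κ := by
  set s := Real.sqrt κ with hs
  have hz0 : 1 < z := by
    have h1 := Real.sqrt_le_sqrt (show (1:ℝ) ≤ 1+κ by linarith)
    rw [Real.sqrt_one] at h1
    linarith
  have hzpos : (0:ℝ) < z := by linarith
  have hspos : (0:ℝ) < s := Real.sqrt_pos.2 hκ
  have hsk : s^2 = κ := Real.sq_sqrt hκ.le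
  have hs3 : s ≤ 1e-3 := by nlinarith
  have hκs : κ ≤ 1e-3 * s := by nlinarith
  set E := Real.exp (-(z^2)/2) with hE
  have hEpos : 0 < E := Real.exp_pos _
  have hE1 : E ≤ 1 := Real.exp_le_one_iff.2 (by nlinarith)
  have hz16 : z < 16 := z_lt_16 κ z hκ (by linarith) hz0 hz2
  -- step 2 : identity  hh z = A + P
  set P := Real.exp (-κ/2) * s ^ κ / z ^ κ with hP
  have hzpow : (0:ℝ) < z ^ κ := Real.rpow_pos_of_pos hzpos κ
  have hB : ((z - s)^2 + 1) * E = P := by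
    have hsk2 : κ ^ (κ/2) = s ^ κ := by
      rw [hs, Real.sqrt_eq_rpow, ← Real.rpow_mul hκ.le]
      congr 1; ring
    have h1 : Real.exp ((z^2-κ)/2) = Real.exp (z^2/2) * Real.exp (-κ/2) := by
      rw [← Real.exp_add]; ring_nf
    have hEmul : Real.exp (z^2/2) * E = 1 := by
      rw [hE, ← Real.exp_add, show z^2/2 + -(z^2)/2 = 0 by ring, Real.exp_zero]
    rw [hsk2, h1] at hz2
    rw [hP, eq_div_iff (ne_of_gt hzpow)]
    calc ((z-s)^2+1) * E * z^κ
        = (z^κ * ((z-s)^2+1)) * E := by ring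
      _ = (Real.exp (z^2/2) * Real.exp (-κ/2) * s^κ) * E := by rw [hz2]
      _ = Real.exp (-κ/2) * s^κ * (Real.exp (z^2/2) * E) := by ring
      _ = Real.exp (-κ/2) * s^κ := by rw [hEmul]; ring
  have hhz : hh z = (2*z*s - κ) * E + P := by
    unfold hh
    linear_combination hB - E * hsk
  -- step 3 : P bounds
  obtain ⟨hPlow, hPup⟩ : 1 - 0.1 * s ≤ P ∧ P ≤ 1 := by
    rw [hP]; exact P_bounds κ z hκ hκ1.le hz0 hz16
  clear hz1 hz2 hB hzpow
  have hκs : κ ≤ 1e-3 * s := by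
    linarith [mul_le_mul_of_nonneg_right hs3 hspos.le, hsk]
  have hzsq1 : (1:ℝ) ≤ z^2 := by
    have := mul_le_mul hz0.le hz0.le zero_le_one hzpos.le
    linarith [this]
  -- step 4 : A ≥ 0 and z < 2
  have hA0 : (0:ℝ) ≤ (2*z*s - κ) * E := by
    have h1 : (0:ℝ) ≤ s * (2*z - s) := mul_nonneg hspos.le (by linarith)
    have h2 : (0:ℝ) ≤ 2*z*s - κ := by linarith [h1, hsk]
    positivity
  have hz2' : z < 2 := by
    by_contra hzz
    push_neg at hzz
    have h1 : hh z ≤ hh 2 := hh_mono 2 z (by norm_num) hzz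
    have h2 : hh 2 = 5 * Real.exp (-2) := by unfold hh; norm_num
    have h3 : hh 2 ≤ 0.685 := by rw [h2]; linarith [exp_neg_two_le']
    have h4 : 1 - 0.1 * s ≤ hh z := by rw [hhz]; linarith
    linarith
  -- step 5 : 1.1 < z
  have hz11 : 1.1 < z := by
    by_contra hzz
    push_neg at hzz
    have h1 : hh (1.1) ≤ hh z := hh_mono z 1.1 hz0.le hzz
    have h2 : hh (1.1) = 2.21 * Real.exp (-0.605) := by
      unfold hh; norm_num
    have h3 : (1.1467:ℝ) ≤ hh (1.1) := by rw [h2]; linarith [exp_neg_point605_ge']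
    have h5 : 2*z*s - κ ≤ 2.2 * s := by
      have := mul_le_mul_of_nonneg_right (show 2*z ≤ 2.2 by linarith) hspos.le
      linarith
    have h6 : (2*z*s - κ) * E ≤ 2.2 * s * 1 :=
      mul_le_mul h5 hE1 hEpos.le (by positivity)
    have h7 : hh z ≤ 1.0022 := by rw [hhz]; linarith
    linarith
  -- c₀ facts
  have hhc₀ : hh c₀ = 1 := by
    unfold hh
    rw [hc₀2, ← Real.exp_add, show c₀^2/2 + -(c₀^2)/2 = 0 by ring, Real.exp_zero]
  have hc₀2' : c₀ ≤ 2 := by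
    by_contra hcc
    push_neg at hcc
    have h1 : hh c₀ ≤ hh 2 := hh_mono 2 c₀ (by norm_num) hcc.le
    have h2 : hh 2 = 5 * Real.exp (-2) := by unfold hh; norm_num
    have h3 : hh 2 ≤ 0.685 := by rw [h2]; linarith [exp_neg_two_le']
    rw [hhc₀] at h1; linarith
  -- step 6 : hh z > 1, hence z < c₀
  have hEge : Real.exp (-2) ≤ E := by
    rw [hE]; apply Real.exp_le_exp.2
    have := mul_nonneg hzpos.le (show (0:ℝ) ≤ 2 - z by linarith)
    linarith [this]
  have hAlow : 0.29 * s ≤ (2*z*s - κ) * E := by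
    have h1 : 2.199 * s ≤ 2*z*s - κ := by
      have := mul_le_mul_of_nonneg_right (show (2.2:ℝ) ≤ 2*z by linarith) hspos.le
      linarith
    have h2 : (2.199 * s) * 0.135 ≤ (2*z*s - κ) * E :=
      mul_le_mul h1 (le_trans exp_neg_two_ge' hEge) (by norm_num) (by linarith)
    linarith
  have hgt1 : 1 < hh z := by
    rw [hhz]; linarith
  have hzc₀ : z < c₀ := by
    by_contra hcc
    push_neg at hcc
    have := hh_mono c₀ z hc₀1.le hcc
    rw [hhc₀] at this
    linarith
  refine ⟨hzc₀, ?_⟩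
  -- step 7 : the quantitative bound
  have hzmem : z ∈ Set.Icc (1.1:ℝ) 2 := ⟨hz11.le, hz2'.le⟩
  have hcmem : c₀ ∈ Set.Icc (1.1:ℝ) 2 := ⟨by linarith, hc₀2'⟩
  have hphi := phi_antitoneOn hzmem hcmem hzc₀.le
  simp only at hphi
  have hAup : (2*z*s - κ) * E ≤ 2.7 * s := by
    have h5 : 2*z*s - κ ≤ 4 * s := by
      have := mul_le_mul_of_nonneg_right (show 2*z ≤ 4 by linarith) hspos.le
      linarith
    have h6 : E ≤ 2/3 := by
      refine le_trans ?_ exp_neg_half_le'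
      rw [hE]; apply Real.exp_le_exp.2; linarith
    have h7 : (2*z*s - κ) * E ≤ (4*s) * (2/3) :=
      mul_le_mul h5 h6 hEpos.le (by positivity)
    linarith
  have hhz1 : hh z - 1 ≤ 2.7 * s := by rw [hhz]; linarith
  have hfin : 0.03 * (c₀ - z) ≤ hh z - hh c₀ := by linarith
  rw [hhc₀] at hfin
  linarith

/-- If `c : (0,∞) → ℝ` satisfies, for every `κ > 0`, `c(κ) > √(1+κ)` and
`c(κ)^κ·((c(κ) − √κ)² + 1) = exp((c(κ)² − κ)/2)·κ^{κ/2}` (i.e. `c(κ) = c_κ`), then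
`c(κ) → c₀` as `κ → 0⁺`, and there exist `κ₀ > 0`, `C > 0` such that for all
`κ ∈ (0, κ₀)`, `c(κ) < c₀` and `c₀ − c(κ) ≤ C·√κ`. -/
theorem stmt2 (c : ℝ → ℝ) (c₀ : ℝ)
    (hc₀ : 1 < c₀ ∧ c₀ ^ 2 + 1 = Real.exp (c₀ ^ 2 / 2))
    (hc : ∀ κ : ℝ, 0 < κ → Real.sqrt (1 + κ) < c κ ∧
      (c κ) ^ κ * ((c κ - Real.sqrt κ) ^ 2 + 1)
        = Real.exp (((c κ) ^ 2 - κ) / 2) * κ ^ (κ / 2)) :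
    Tendsto c (𝓝[>] 0) (𝓝 c₀) ∧
    ∃ κ₀ > (0:ℝ), ∃ C > (0:ℝ), ∀ κ : ℝ, 0 < κ → κ < κ₀ →
      c κ < c₀ ∧ c₀ - c κ ≤ C * Real.sqrt κ := by
  have hkey : ∀ κ : ℝ, 0 < κ → κ < 1e-6 → c κ < c₀ ∧ c₀ - c κ ≤ 100 * Real.sqrt κ := by
    intro κ h1 h2
    exact key κ (c κ) c₀ h1 h2 hc₀.1 hc₀.2 (hc κ h1).1 (hc κ h1).2
  constructor
  · have hten : Tendsto (fun κ => c κ - c₀) (𝓝[>] (0:ℝ)) (𝓝 0) := by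
      apply squeeze_zero_norm' (a := fun κ => 100 * Real.sqrt κ)
      · have hev : Set.Ioo (0:ℝ) 1e-6 ∈ 𝓝[>] (0:ℝ) :=
          Ioo_mem_nhdsGT_of_mem (Set.mem_Ico.2 ⟨le_refl (0:ℝ), by norm_num⟩)
        filter_upwards [hev] with κ hκ
        obtain ⟨hlt, hle⟩ := hkey κ hκ.1 hκ.2
        rw [Real.norm_eq_abs, abs_le]
        constructor <;> [linarith; linarith [Real.sqrt_nonneg κ]]
      · have hcont : Continuous (fun κ : ℝ => 100 * Real.sqrt κ) := by continuity
        have := hcont.tendsto 0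
        simp only [Real.sqrt_zero, mul_zero] at this
        exact this.mono_left nhdsWithin_le_nhds
    have := hten.add_const c₀
    simpa using this
  · exact ⟨1e-6, by norm_num, 100, by norm_num, hkey⟩
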